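/- arXiv:2112.03897 — 4 statements merged into one kernel-verified Lean document; each statement's English description precedes it below -/
import Mathlib

section
/- The Nambu-determinant bracket {f,g} = ρ·det(∂(a,f,g)/∂(x,y,z)) on ℝ³ satisfies the Jacobi identity: {f,{g,h}} + {g,{h,f}} + {h,{f,g}} = 0 for all smooth f, g, h. -/
open scoped BigOperators

/-- Partial derivative of a scalar function on `ℝ^d` in the `i`-th coordinate direction. -/
noncomputable def pd {d : ℕ} (i : Fin d) (f : (Fin d → ℝ) → ℝ) (x : Fin d → ℝ) : ℝ :=
  fderiv ℝ f x (Pi.single i 1)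

/-- The Nambu-determinant bracket on ℝ³:
`{f,g} = ρ · det(∂(a,f,g)/∂(x,y,z))`. -/
noncomputable def nambu (ρ a f g : (Fin 3 → ℝ) → ℝ) (x : Fin 3 → ℝ) : ℝ :=
  ρ x * (Matrix.of fun i j => pd j (![a, f, g] i) x).det

/-- Second partial derivative. -/
noncomputable def pd2 (i j : Fin 3) (u : (Fin 3 → ℝ) → ℝ) (x : Fin 3 → ℝ) : ℝ :=
  fderiv ℝ (fderiv ℝ u) x (Pi.single i 1) (Pi.single j 1)

lemma pd2_symm (u : (Fin 3 → ℝ) → ℝ) (hu : ContDiff ℝ (⊤ : ℕ∞) u) (i j : Fin 3) (x : Fin 3 → ℝ) :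
    pd2 i j u x = pd2 j i u x :=
  second_derivative_symmetric (fun y => (hu.differentiable (by simp) y).hasFDerivAt)
    (((hu.fderiv_right (m := 1) (by exact WithTop.coe_le_coe.mpr le_top)).differentiable one_ne_zero x).hasFDerivAt) _ _

lemma nambu_expand (ρ a f g : (Fin 3 → ℝ) → ℝ) (x : Fin 3 → ℝ) :
    nambu ρ a f g x = ρ x *
      (pd 0 a x * pd 1 f x * pd 2 g x - pd 0 a x * pd 2 f x * pd 1 g x
       - pd 1 a x * pd 0 f x * pd 2 g x + pd 1 a x * pd 2 f x * pd 0 g x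
       + pd 2 a x * pd 0 f x * pd 1 g x - pd 2 a x * pd 1 f x * pd 0 g x) := by
  simp [nambu, Matrix.det_fin_three]

lemma hasFDerivAt_pd (u : (Fin 3 → ℝ) → ℝ) (hu : ContDiff ℝ (⊤ : ℕ∞) u) (j : Fin 3) (x : Fin 3 → ℝ) :
    HasFDerivAt (pd j u) ((fderiv ℝ (fderiv ℝ u) x).flip (Pi.single j 1)) x := by
  have h1 : HasFDerivAt (fderiv ℝ u) (fderiv ℝ (fderiv ℝ u) x) x :=
    (((hu.fderiv_right (m := 1) (by exact WithTop.coe_le_coe.mpr le_top)).differentiable one_ne_zero) x).hasFDerivAt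
  have h2 := h1.clm_apply (hasFDerivAt_const (Pi.single j 1) x)
  simp at h2
  exact h2

lemma pd_nambu (ρ a g h : (Fin 3 → ℝ) → ℝ)
    (hρ : ContDiff ℝ (⊤ : ℕ∞) ρ) (ha : ContDiff ℝ (⊤ : ℕ∞) a)
    (hg : ContDiff ℝ (⊤ : ℕ∞) g) (hh : ContDiff ℝ (⊤ : ℕ∞) h) (i : Fin 3) (x : Fin 3 → ℝ) :
    pd i (nambu ρ a g h) x =
      pd i ρ x * (pd 0 a x * pd 1 g x * pd 2 h x - pd 0 a x * pd 2 g x * pd 1 h x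
        - pd 1 a x * pd 0 g x * pd 2 h x + pd 1 a x * pd 2 g x * pd 0 h x
        + pd 2 a x * pd 0 g x * pd 1 h x - pd 2 a x * pd 1 g x * pd 0 h x)
      + ρ x *
        ((pd2 i 0 a x * pd 1 g x * pd 2 h x - pd2 i 0 a x * pd 2 g x * pd 1 h x
          - pd2 i 1 a x * pd 0 g x * pd 2 h x + pd2 i 1 a x * pd 2 g x * pd 0 h x
          + pd2 i 2 a x * pd 0 g x * pd 1 h x - pd2 i 2 a x * pd 1 g x * pd 0 h x)
        + (pd 0 a x * pd2 i 1 g x * pd 2 h x - pd 0 a x * pd2 i 2 g x * pd 1 h x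
          - pd 1 a x * pd2 i 0 g x * pd 2 h x + pd 1 a x * pd2 i 2 g x * pd 0 h x
          + pd 2 a x * pd2 i 0 g x * pd 1 h x - pd 2 a x * pd2 i 1 g x * pd 0 h x)
        + (pd 0 a x * pd 1 g x * pd2 i 2 h x - pd 0 a x * pd 2 g x * pd2 i 1 h x
          - pd 1 a x * pd 0 g x * pd2 i 2 h x + pd 1 a x * pd 2 g x * pd2 i 0 h x
          + pd 2 a x * pd 0 g x * pd2 i 1 h x - pd 2 a x * pd 1 g x * pd2 i 0 h x)) := by
  have hfun : nambu ρ a g h = fun y => ρ y *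
      (pd 0 a y * pd 1 g y * pd 2 h y - pd 0 a y * pd 2 g y * pd 1 h y
       - pd 1 a y * pd 0 g y * pd 2 h y + pd 1 a y * pd 2 g y * pd 0 h y
       + pd 2 a y * pd 0 g y * pd 1 h y - pd 2 a y * pd 1 g y * pd 0 h y) :=
    funext fun y => nambu_expand ρ a g h y
  have A0 := hasFDerivAt_pd a ha 0 x
  have A1 := hasFDerivAt_pd a ha 1 x
  have A2 := hasFDerivAt_pd a ha 2 x
  have G0 := hasFDerivAt_pd g hg 0 x
  have G1 := hasFDerivAt_pd g hg 1 x
  have G2 := hasFDerivAt_pd g hg 2 x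
  have H0 := hasFDerivAt_pd h hh 0 x
  have H1 := hasFDerivAt_pd h hh 1 x
  have H2 := hasFDerivAt_pd h hh 2 x
  have hρ' : HasFDerivAt ρ (fderiv ℝ ρ x) x := ((hρ.differentiable (by simp)) x).hasFDerivAt
  have key := hρ'.mul (((((((A0.mul G1).mul H2).sub ((A0.mul G2).mul H1)).sub
      ((A1.mul G0).mul H2)).add ((A1.mul G2).mul H0)).add
      ((A2.mul G0).mul H1)).sub ((A2.mul G1).mul H0))
  have hp : pd i (nambu ρ a g h) x = fderiv ℝ (nambu ρ a g h) x (Pi.single i 1) := rfl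
  rw [hp, hfun]
  erw [key.fderiv]
  simp only [ContinuousLinearMap.add_apply, ContinuousLinearMap.coe_smul', Pi.smul_apply,
    ContinuousLinearMap.coe_sub', Pi.sub_apply, ContinuousLinearMap.flip_apply,
    smul_eq_mul, Pi.mul_apply, Pi.add_apply, pd2, pd]
  ring

/-- The Nambu-determinant bracket satisfies the Jacobi identity. -/
theorem nambu_jacobi (ρ a f g h : (Fin 3 → ℝ) → ℝ)
    (hρ : ContDiff ℝ (⊤ : ℕ∞) ρ) (ha : ContDiff ℝ (⊤ : ℕ∞) a)
    (hf : ContDiff ℝ (⊤ : ℕ∞) f) (hg : ContDiff ℝ (⊤ : ℕ∞) g) (hh : ContDiff ℝ (⊤ : ℕ∞) h) :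
    ∀ x, nambu ρ a f (nambu ρ a g h) x + nambu ρ a g (nambu ρ a h f) x
        + nambu ρ a h (nambu ρ a f g) x = 0 := by
  intro x
  rw [nambu_expand ρ a f (nambu ρ a g h) x, nambu_expand ρ a g (nambu ρ a h f) x,
    nambu_expand ρ a h (nambu ρ a f g) x,
    pd_nambu ρ a g h hρ ha hg hh 0 x, pd_nambu ρ a g h hρ ha hg hh 1 x,
    pd_nambu ρ a g h hρ ha hg hh 2 x,
    pd_nambu ρ a h f hρ ha hh hf 0 x, pd_nambu ρ a h f hρ ha hh hf 1 x,
    pd_nambu ρ a h f hρ ha hh hf 2 x,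
    pd_nambu ρ a f g hρ ha hf hg 0 x, pd_nambu ρ a f g hρ ha hf hg 1 x,
    pd_nambu ρ a f g hρ ha hf hg 2 x]
  simp only [pd2_symm a ha 1 0 x, pd2_symm a ha 2 0 x, pd2_symm a ha 2 1 x,
    pd2_symm f hf 1 0 x, pd2_symm f hf 2 0 x, pd2_symm f hf 2 1 x,
    pd2_symm g hg 1 0 x, pd2_symm g hg 2 0 x, pd2_symm g hg 2 1 x,
    pd2_symm h hh 1 0 x, pd2_symm h hh 2 0 x, pd2_symm h hh 2 1 x]
  ring
end

section
/- Let E be the Euler vector field on ℝ^d and V a vector field with homogeneous polynomial coefficients of degree k. Then the bi-vector P = V ∧ E, with components P^{ij} = V^i x^j − V^j x^i, is Poisson: it satisfies the Jacobi identity Σ_l (P^{il} ∂P^{jk}/∂x^l + P^{jl} ∂P^{ki}/∂x^l + P^{kl} ∂P^{ij}/∂x^l) = 0 for all i, j, k. -/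
open scoped BigOperators

/-- The `j`-th component of the Lie bracket `[V,W]` of two vector fields on ℝ^d:
`[V,W]^j = Σ_i (V^i ∂W^j/∂x^i − W^i ∂V^j/∂x^i)`. -/
noncomputable def lieBracket {d : ℕ} (V W : (Fin d → ℝ) → (Fin d → ℝ))
    (x : Fin d → ℝ) (j : Fin d) : ℝ :=
  (∑ i, V x i * pd i (fun y => W y j) x) - ∑ i, W x i * pd i (fun y => V y j) x

open MvPolynomial

lemma diff_proj {d : ℕ} (i : Fin d) : Differentiable ℝ (fun y : Fin d → ℝ => y i) :=
  (ContinuousLinearMap.proj i : (Fin d → ℝ) →L[ℝ] ℝ).differentiable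

lemma diff_eval {d : ℕ} (q : MvPolynomial (Fin d) ℝ) :
    Differentiable ℝ (fun y : Fin d → ℝ => MvPolynomial.eval y q) := by
  induction q using MvPolynomial.induction_on with
  | C a => simpa using differentiable_const a
  | add p q hp hq => simpa using hp.fun_add hq
  | mul_X p i hp => simp only [map_mul, eval_X]; exact hp.mul (diff_proj i)

lemma pd_proj {d : ℕ} (l i : Fin d) (x : Fin d → ℝ) :
    pd l (fun y => y i) x = if i = l then 1 else 0 := by
  have : fderiv ℝ (fun y : Fin d → ℝ => y i) x = ContinuousLinearMap.proj i :=
    (ContinuousLinearMap.proj i : (Fin d → ℝ) →L[ℝ] ℝ).fderiv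
  simp [pd, this, Pi.single_apply]

lemma pd_eval {d : ℕ} (l : Fin d) (q : MvPolynomial (Fin d) ℝ) (x : Fin d → ℝ) :
    pd l (fun y => MvPolynomial.eval y q) x = MvPolynomial.eval x (pderiv l q) := by
  induction q using MvPolynomial.induction_on with
  | C a => simp [pd]
  | add p q hp hq =>
      simp only [map_add]
      rw [← hp, ← hq, pd, pd, pd, fderiv_fun_add (diff_eval p x) (diff_eval q x)]
      simp
  | mul_X p i hp =>
      simp only [map_mul, eval_X, pderiv_mul, pderiv_X, map_add]
      rw [pd, fderiv_fun_mul (diff_eval p x) (diff_proj i x)]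
      have h2 := pd_proj l i x
      rw [pd] at h2 hp
      simp [hp, h2, Pi.single_apply, mul_comm]
      ring

lemma pd_comp {d : ℕ} (l j m : Fin d) (p : Fin d → MvPolynomial (Fin d) ℝ) (x : Fin d → ℝ) :
    pd l (fun y => MvPolynomial.eval y (p j) * y m - MvPolynomial.eval y (p m) * y j) x
      = MvPolynomial.eval x (pderiv l (p j)) * x m + MvPolynomial.eval x (p j) * (if m = l then 1 else 0)
        - MvPolynomial.eval x (pderiv l (p m)) * x j - MvPolynomial.eval x (p m) * (if j = l then 1 else 0) := by
  have hfun : (fun y => MvPolynomial.eval y (p j) * y m - MvPolynomial.eval y (p m) * y j)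
      = fun y : Fin d → ℝ => MvPolynomial.eval y (p j * X m - p m * X j) := by
    funext y; simp
  rw [hfun, pd_eval]
  simp only [map_sub, pderiv_mul, pderiv_X, map_add, map_mul, eval_X]
  by_cases hm : m = l <;> by_cases hj : j = l <;> simp [hm, hj, Pi.single_apply] <;> ring
open MvPolynomial

lemma euler_mono {d k : ℕ} (s : Fin d →₀ ℕ) (c : ℝ) (hs : ∑ i, s i = k) (x : Fin d → ℝ) :
    ∑ l : Fin d, x l * MvPolynomial.eval x (pderiv l (monomial s c)) = k * MvPolynomial.eval x (monomial s c) := by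
  have hterm : ∀ l : Fin d, x l * MvPolynomial.eval x (pderiv l (monomial s c))
      = (s l : ℝ) * MvPolynomial.eval x (monomial s c) := by
    intro l
    rw [pderiv_monomial, eval_monomial, eval_monomial, Finsupp.prod_pow, Finsupp.prod_pow]
    rcases Nat.eq_zero_or_pos (s l) with h | h
    · simp [h]
    · have hsub : ∀ i : Fin d, (s - fun₀ | l => 1) i = if i = l then s l - 1 else s i := by
        intro i
        rw [Finsupp.tsub_apply]
        by_cases hi : i = l
        · simp [hi]
        · simp [hi, Finsupp.single_apply, (Ne.symm hi : ¬ l = i)]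
      rw [Finset.prod_congr rfl (fun i _ => by rw [hsub i])]
      rw [← Finset.mul_prod_erase Finset.univ _ (Finset.mem_univ l),
          ← Finset.mul_prod_erase Finset.univ (fun i => x i ^ s i) (Finset.mem_univ l)]
      have h1 : ∏ i ∈ Finset.univ.erase l, x i ^ (if i = l then s l - 1 else s i)
          = ∏ i ∈ Finset.univ.erase l, x i ^ s i :=
        Finset.prod_congr rfl (fun i hi => by rw [if_neg (Finset.mem_erase.mp hi).1])
      have h2 : x l * x l ^ (s l - 1) = x l ^ s l := by
        conv_rhs => rw [← Nat.succ_pred_eq_of_pos h, Nat.pred_eq_sub_one, pow_succ]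
        ring
      rw [h1, if_pos rfl, ← h2]
      ring
  rw [Finset.sum_congr rfl (fun l _ => hterm l), ← Finset.sum_mul]
  congr 1
  rw [← hs]
  exact (Nat.cast_sum _ _).symm

lemma euler {d k : ℕ} (q : MvPolynomial (Fin d) ℝ) (hq : q.IsHomogeneous k) (x : Fin d → ℝ) :
    ∑ l : Fin d, x l * MvPolynomial.eval x (pderiv l q) = k * MvPolynomial.eval x q := by
  conv_lhs => rw [q.as_sum]
  conv_rhs => rw [q.as_sum]
  simp only [map_sum, Finset.mul_sum]
  rw [Finset.sum_comm]
  refine Finset.sum_congr rfl (fun s hs => ?_)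
  refine euler_mono s _ ?_ x
  have := hq (MvPolynomial.mem_support_iff.mp hs)
  rw [← this]
  simp [Finsupp.weight_apply, Finsupp.sum_fintype]


/-- The bi-vector P = V ∧ E, P^{ij} = V^i x^j − V^j x^i, with V a homogeneous
polynomial vector field of degree k, satisfies the Jacobi identity. -/
theorem wedge_euler_poisson (d k : ℕ) (p : Fin d → MvPolynomial (Fin d) ℝ)
    (hp : ∀ j, (p j).IsHomogeneous k) :
    ∀ (x : Fin d → ℝ) (i j m : Fin d),
      (∑ l : Fin d,
        ((MvPolynomial.eval x (p i) * x l - MvPolynomial.eval x (p l) * x i) *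
            pd l (fun y => MvPolynomial.eval y (p j) * y m - MvPolynomial.eval y (p m) * y j) x
          + (MvPolynomial.eval x (p j) * x l - MvPolynomial.eval x (p l) * x j) *
            pd l (fun y => MvPolynomial.eval y (p m) * y i - MvPolynomial.eval y (p i) * y m) x
          + (MvPolynomial.eval x (p m) * x l - MvPolynomial.eval x (p l) * x m) *
            pd l (fun y => MvPolynomial.eval y (p i) * y j - MvPolynomial.eval y (p j) * y i) x)) = 0 := by
  intro x i j m
  set A : Fin d → ℝ := fun a => MvPolynomial.eval x (p a) with hA
  set D : Fin d → Fin d → ℝ := fun l a => MvPolynomial.eval x (pderiv l (p a)) with hD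
  have key : ∀ l : Fin d,
      ((A i * x l - A l * x i) *
          pd l (fun y => MvPolynomial.eval y (p j) * y m - MvPolynomial.eval y (p m) * y j) x
        + (A j * x l - A l * x j) *
          pd l (fun y => MvPolynomial.eval y (p m) * y i - MvPolynomial.eval y (p i) * y m) x
        + (A m * x l - A l * x m) *
          pd l (fun y => MvPolynomial.eval y (p i) * y j - MvPolynomial.eval y (p j) * y i) x)
      = (A i * x m - A m * x i) * (x l * D l j)
        + (A j * x i - A i * x j) * (x l * D l m)
        + (A m * x j - A j * x m) * (x l * D l i)
        + ((if m = l then ((A i * x m - A m * x i) * A j - (A j * x m - A m * x j) * A i) else 0)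
          + (if i = l then ((A j * x i - A i * x j) * A m - (A m * x i - A i * x m) * A j) else 0)
          + (if j = l then ((A m * x j - A j * x m) * A i - (A i * x j - A j * x i) * A m) else 0)) := by
    intro l
    rw [pd_comp l j m p x, pd_comp l m i p x, pd_comp l i j p x]
    simp only [hA, hD]
    by_cases h1 : m = l <;> by_cases h2 : i = l <;> by_cases h3 : j = l <;>
      simp [h1, h2, h3] <;> ring
  rw [Finset.sum_congr rfl fun l _ => key l]
  rw [Finset.sum_add_distrib, Finset.sum_add_distrib, Finset.sum_add_distrib,
    Finset.sum_add_distrib, Finset.sum_add_distrib,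
    ← Finset.mul_sum, ← Finset.mul_sum, ← Finset.mul_sum]
  have e1 : ∑ l : Fin d, x l * D l j = k * A j := euler (p j) (hp j) x
  have e2 : ∑ l : Fin d, x l * D l m = k * A m := euler (p m) (hp m) x
  have e3 : ∑ l : Fin d, x l * D l i = k * A i := euler (p i) (hp i) x
  rw [e1, e2, e3, Finset.sum_ite_eq, Finset.sum_ite_eq, Finset.sum_ite_eq]
  simp only [Finset.mem_univ, if_true]
  ring
end

section
/- More generally, if E is the Euler vector field on ℝ^d and V is any C¹ vector field satisfying [E, V] = λ·V with λ ≠ 0, then the bi-vector P = V ∧ E with components P^{ij} = V^i x^j − V^j x^i satisfies the Jacobi identity and hence is Poisson. -/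
open scoped BigOperators

lemma pd_coord {d : ℕ} (l q : Fin d) (x : Fin d → ℝ) :
    pd l (fun y => y q) x = if q = l then 1 else 0 := by
  unfold pd
  have h : (fun y : Fin d → ℝ => y q) = (ContinuousLinearMap.proj q : (Fin d → ℝ) →L[ℝ] ℝ) := rfl
  rw [h, ContinuousLinearMap.fderiv]
  simp [Pi.single_apply]

lemma pd_mul {d : ℕ} (l : Fin d) (f g : (Fin d → ℝ) → ℝ) (x : Fin d → ℝ)
    (hf : DifferentiableAt ℝ f x) (hg : DifferentiableAt ℝ g x) :
    pd l (fun y => f y * g y) x = pd l f x * g x + f x * pd l g x := by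
  unfold pd
  rw [fderiv_fun_mul hf hg]
  simp [smul_eq_mul]
  ring

lemma pd_sub {d : ℕ} (l : Fin d) (f g : (Fin d → ℝ) → ℝ) (x : Fin d → ℝ)
    (hf : DifferentiableAt ℝ f x) (hg : DifferentiableAt ℝ g x) :
    pd l (fun y => f y - g y) x = pd l f x - pd l g x := by
  unfold pd
  rw [fderiv_fun_sub hf hg]
  simp

/-- If V is a C¹ vector field with [E,V] = λ·V for some λ ≠ 0, then
P = V ∧ E satisfies the Jacobi identity, hence is Poisson. -/
theorem wedge_euler_poisson_general (d : ℕ) (V : (Fin d → ℝ) → (Fin d → ℝ))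
    (hV : ContDiff ℝ 1 V) (lam : ℝ) (hlam : lam ≠ 0)
    (hbr : ∀ (x : Fin d → ℝ) (j : Fin d),
      lieBracket (fun y => y) V x j = lam * V x j) :
    ∀ (x : Fin d → ℝ) (i j m : Fin d),
      (∑ l : Fin d,
        ((V x i * x l - V x l * x i) * pd l (fun y => V y j * y m - V y m * y j) x
          + (V x j * x l - V x l * x j) * pd l (fun y => V y m * y i - V y i * y m) x
          + (V x m * x l - V x l * x m) * pd l (fun y => V y i * y j - V y j * y i) x)) = 0 := by
  intro x i j m
  -- differentiability of components
  have hVd : ∀ (k : Fin d) (y : Fin d → ℝ), DifferentiableAt ℝ (fun z => V z k) y := by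
    intro k y
    exact ((ContinuousLinearMap.proj k : (Fin d → ℝ) →L[ℝ] ℝ).differentiable.comp
      (hV.differentiable one_ne_zero)) y
  have hcoordd : ∀ (q : Fin d) (y : Fin d → ℝ), DifferentiableAt ℝ (fun z : Fin d → ℝ => z q) y := by
    intro q y
    exact (ContinuousLinearMap.proj q : (Fin d → ℝ) →L[ℝ] ℝ).differentiable y
  -- key: expansion of pd of the bivector components
  have key : ∀ (l p q : Fin d),
      pd l (fun y => V y p * y q - V y q * y p) x
        = pd l (fun y => V y p) x * x q + V x p * (if q = l then 1 else 0)
          - (pd l (fun y => V y q) x * x p + V x q * (if p = l then 1 else 0)) := by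
    intro l p q
    rw [pd_sub l (fun y => V y p * y q) (fun y => V y q * y p) x ((hVd p x).mul (hcoordd q x)) ((hVd q x).mul (hcoordd p x)),
      pd_mul l _ _ x (hVd p x) (hcoordd q x), pd_mul l _ _ x (hVd q x) (hcoordd p x),
      pd_coord, pd_coord]
  -- the Euler identity from the bracket hypothesis
  have hB : ∀ k : Fin d, ∑ l, x l * pd l (fun y => V y k) x = (lam + 1) * V x k := by
    intro k
    have h := hbr x k
    unfold lieBracket at h
    have h1 : ∀ l : Fin d, V x l * pd l (fun y : Fin d → ℝ => y k) x
        = if k = l then V x l else 0 := by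
      intro l
      rw [pd_coord]
      split_ifs <;> ring
    rw [Finset.sum_congr rfl (fun l _ => h1 l), Finset.sum_ite_eq] at h
    simp only [Finset.mem_univ, if_true] at h
    linarith
  -- per-term evaluation of the cyclic sums
  have cyc : ∀ a b c : Fin d,
      ∑ l, (V x a * x l - V x l * x a) * pd l (fun y => V y b * y c - V y c * y b) x
        = V x a * ((lam + 1) * V x b * x c - (lam + 1) * V x c * x b)
          + V x a * (V x b * x c - V x c * x b)
          - x a * ((∑ l, V x l * pd l (fun y => V y b) x) * x c
              - (∑ l, V x l * pd l (fun y => V y c) x) * x b) := by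
    intro a b c
    have step : ∀ l : Fin d,
        (V x a * x l - V x l * x a) * pd l (fun y => V y b * y c - V y c * y b) x
          = (V x a * x c) * (x l * pd l (fun y => V y b) x)
            - (x a * x c) * (V x l * pd l (fun y => V y b) x)
            - (V x a * x b) * (x l * pd l (fun y => V y c) x)
            + (x a * x b) * (V x l * pd l (fun y => V y c) x)
            + ((if c = l then (V x a * x l - V x l * x a) * V x b else 0)
              - (if b = l then (V x a * x l - V x l * x a) * V x c else 0)) := by
      intro l
      rw [key l b c]
      split_ifs <;> ring
    rw [Finset.sum_congr rfl (fun l _ => step l)]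
    rw [Finset.sum_add_distrib, Finset.sum_add_distrib, Finset.sum_sub_distrib,
      Finset.sum_sub_distrib, Finset.sum_sub_distrib,
      ← Finset.mul_sum, ← Finset.mul_sum, ← Finset.mul_sum, ← Finset.mul_sum,
      Finset.sum_ite_eq, Finset.sum_ite_eq]
    simp only [Finset.mem_univ, if_true]
    rw [hB b, hB c]
    ring
  rw [Finset.sum_add_distrib, Finset.sum_add_distrib, cyc i j m, cyc j m i, cyc m i j]
  ring
end

section
/- Let d ≥ 2, k ≥ 2, and define on ℝ^d the Poisson bi-vector P = V ∧ E with V^i = (x^i)^k and E the Euler field, i.e. P^{ij} = (x^i)^k x^j − (x^j)^k x^i. Then every polynomial a ∈ ℝ[x¹,…,x^d] satisfying Σ_j P^{ij} ∂a/∂x^j = 0 for all i is constant; i.e., P admits no non-constant global polynomial Casimir. -/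
open scoped BigOperators
open MvPolynomial

lemma euler_coeff {d : ℕ} (a : MvPolynomial (Fin d) ℝ) (m : Fin d →₀ ℕ) :
    coeff m (∑ j : Fin d, X j * pderiv j a) = (∑ j : Fin d, (m j : ℝ)) * coeff m a := by
  induction a using MvPolynomial.induction_on' with
  | monomial s c =>
    have key : ∀ j : Fin d, (X j : MvPolynomial (Fin d) ℝ) * pderiv j (monomial s c)
        = monomial s (c * s j) := by
      intro j
      rw [pderiv_monomial]
      by_cases hs : s j = 0
      · simp [hs]
      · rw [X, monomial_mul, one_mul]
        have hss : Finsupp.single j 1 + (s - Finsupp.single j 1) = s := by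
          ext x
          simp only [Finsupp.add_apply, Finsupp.tsub_apply, Finsupp.single_apply]
          split_ifs with hx
          · subst hx; omega
          · omega
        rw [hss]
    simp only [key]
    rw [← map_sum (monomial s) (fun j => c * (s j : ℝ)) Finset.univ, ← Finset.mul_sum]
    simp only [coeff_monomial]
    split_ifs with hsm
    · subst hsm; ring
    · simp
  | add p q hp hq =>
    simp only [map_add, mul_add, Finset.sum_add_distrib, coeff_add, hp, hq]

/-- The Poisson bi-vector P^{ij} = (x^i)^k x^j − (x^j)^k x^i on ℝ^d (k ≥ 2)
admits no non-constant global polynomial Casimir. -/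
theorem no_polynomial_casimir (d k : ℕ) (hd : 2 ≤ d) (hk : 2 ≤ k)
    (a : MvPolynomial (Fin d) ℝ)
    (h : ∀ i : Fin d, ∑ j : Fin d,
      (X i ^ k * X j - X j ^ k * X i) * pderiv j a = 0) :
    ∃ c : ℝ, a = C c := by
  set E : MvPolynomial (Fin d) ℝ := ∑ j : Fin d, X j * pderiv j a with hE
  set W : MvPolynomial (Fin d) ℝ := ∑ j : Fin d, X j ^ k * pderiv j a with hW
  have key : ∀ i : Fin d, X i ^ k * E = X i * W := by
    intro i
    have e : X i ^ k * E - X i * W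
        = ∑ j : Fin d, (X i ^ k * X j - X j ^ k * X i) * pderiv j a := by
      rw [hE, hW, Finset.mul_sum, Finset.mul_sum, ← Finset.sum_sub_distrib]
      exact Finset.sum_congr rfl fun j _ => by ring
    rw [← sub_eq_zero, e]
    exact h i
  let i0 : Fin d := ⟨0, by omega⟩
  let i1 : Fin d := ⟨1, by omega⟩
  have hne : i0 ≠ i1 := by
    simp only [i0, i1, Fin.mk.injEq, ne_eq]
    omega
  have h01 : (X i1 * X i0 ^ k - X i0 * X i1 ^ k) * E = 0 := by
    have e0 := key i0
    have e1 := key i1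
    have : (X i1 * X i0 ^ k - X i0 * X i1 ^ k) * E
        = X i1 * (X i0 ^ k * E) - X i0 * (X i1 ^ k * E) := by ring
    rw [this, e0, e1]
    ring
  have hf : (X i1 * X i0 ^ k - X i0 * X i1 ^ k : MvPolynomial (Fin d) ℝ) ≠ 0 := by
    intro hzero
    have hev := congrArg (eval (fun j : Fin d => if j = i0 then (2 : ℝ) else 1)) hzero
    simp only [map_sub, map_mul, map_pow, eval_X, map_zero] at hev
    simp only [if_true, if_neg (Ne.symm hne)] at hev
    have h2k : (4 : ℝ) ≤ 2 ^ k := by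
      calc (4 : ℝ) = 2 ^ 2 := by norm_num
      _ ≤ 2 ^ k := by
        apply pow_le_pow_right₀ (by norm_num) hk
    norm_num at hev
    nlinarith
  have hE0 : E = 0 := by
    rcases mul_eq_zero.mp h01 with hc | hc
    · exact absurd hc hf
    · exact hc
  refine ⟨coeff 0 a, ?_⟩
  ext m
  rw [coeff_C]
  split_ifs with hm
  · rw [← hm]
  · have hc := euler_coeff a m
    rw [← hE, hE0, coeff_zero] at hc
    have hpos : (0 : ℝ) < ∑ j : Fin d, (m j : ℝ) := by
      obtain ⟨j, hj⟩ : ∃ j, m j ≠ 0 := by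
        by_contra hall
        push_neg at hall
        exact hm (Finsupp.ext fun j => by simp [hall j]).symm
      refine Finset.sum_pos' (fun j _ => by positivity) ⟨j, Finset.mem_univ j, ?_⟩
      exact_mod_cast Nat.pos_of_ne_zero hj
    have := (mul_eq_zero.mp hc.symm).resolve_left (ne_of_gt hpos)
    simp [this]
end
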